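/- arXiv:1601.06873 — 6 statements merged into one kernel-verified Lean document; each statement's English description precedes it below -/
import Mathlib

section
/- Let G = (V, E, W) be a tree on N vertices with edge weights w_{ij} ∈ (-1,1), and let Σ be the N×N matrix with Σ_{ii} = 1, Σ_{ij} = product of edge weights along the unique path from i to j. Then det Σ = Π_{e_{ij} ∈ E} (1 - w_{ij}²). -/
/-!
Induct on the number of vertices by deleting a leaf `v` with neighbour `u`. Every path from `v`
to a vertex `j ≠ v` runs through `u`, so off the diagonal row `v` of `S` is `w s(v, u)` times
row `u`. Subtracting that multiple of row `u` leaves the single entry `1 - w s(v, u) ^ 2` in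
row `v`, and the complementary minor is the matrix of the tree with `v` deleted.
-/

open Finset

namespace Matrix

variable {n R : Type*} [Fintype n] [DecidableEq n] [CommRing R]

theorem det_eq_mul_det_submatrix_compl_of_row_eq_zero (M : Matrix n n R) {v : n}
    (h : ∀ j ≠ v, M v j = 0) :
    M.det = M v v * (M.submatrix ((↑) : ({v}ᶜ : Set n) → n) (↑)).det := by
  let e := Equiv.sumCompl (· ∈ ({v}ᶜ : Set n))
  have : Unique {x // x ∉ ({v}ᶜ : Set n)} :=
    ⟨⟨⟨v, by simp⟩⟩, fun x => Subtype.ext (by simpa using x.2)⟩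
  have hblock : M.submatrix e e = fromBlocks (M.submatrix (↑) (↑)) (M.submatrix (↑) (↑)) 0
      (of fun _ _ => M v v) := by
    ext (i | ⟨i, hi⟩) (j | ⟨j, hj⟩)
    · rfl
    · rfl
    · obtain rfl : i = v := by simpa using hi
      exact h j j.2
    · obtain rfl : i = v := by simpa using hi
      obtain rfl : j = i := by simpa using hj
      rfl
  rw [← det_submatrix_equiv_self e, hblock, det_fromBlocks_zero₂₁,
    det_unique (of fun _ _ => M v v), mul_comm, of_apply]

theorem det_eq_mul_det_submatrix_compl_of_row_eq_smul (M : Matrix n n R) {u v : n} (huv : u ≠ v)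
    (c : R) (h : ∀ j ≠ v, M v j = c * M u j) :
    M.det = (M v v - c * M u v) * (M.submatrix ((↑) : ({v}ᶜ : Set n) → n) (↑)).det := by
  rw [← det_updateRow_add_smul_self M huv.symm (-c),
    det_eq_mul_det_submatrix_compl_of_row_eq_zero _ (v := v) fun j hj => by simp [h j hj]]
  congr 2
  · simp [sub_eq_add_neg]
  · ext i j
    rw [submatrix_apply, updateRow_ne i.2, submatrix_apply]

end Matrix

namespace SimpleGraph

variable {V R : Type*} [CommRing R] (G : SimpleGraph V)

/-- The matrix `Σ` of the paper: entries are products of edge weights along paths. -/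
def IsPathProductMatrix (w : Sym2 V → R) (S : Matrix V V R) : Prop :=
  ∀ i j (p : G.Walk i j), p.IsPath → S i j = (p.edges.map w).prod

variable {G} {w : Sym2 V → R} {S : Matrix V V R}

namespace IsPathProductMatrix

theorem apply_self (hS : G.IsPathProductMatrix w S) (i : V) : S i i = 1 := by
  simpa using hS i i .nil .nil

theorem apply_of_adj (hS : G.IsPathProductMatrix w S) {i j : V} (h : G.Adj i j) :
    S i j = w s(i, j) := by
  simpa using hS i j (.cons h .nil) (by simpa using h.ne)

theorem apply_of_neighborSet_eq_singleton (hS : G.IsPathProductMatrix w S) (hG : G.Connected)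
    {u v j : V} (hv : G.neighborSet v = {u}) (hj : j ≠ v) : S v j = w s(v, u) * S u j := by
  have hvu : G.Adj v u := by simp [← mem_neighborSet, hv]
  obtain ⟨p, hp⟩ := hG.exists_isPath u j
  have hvp : v ∉ p.support :=
    hp.isTrail.not_mem_support_of_subsingleton_neighborSet hvu.ne hj.symm (by simp [hv])
  rw [hS v j (p.cons hvu) (hp.cons hvp), hS u j p hp, Walk.edges_cons, List.map_cons,
    List.prod_cons]

theorem induce (hS : G.IsPathProductMatrix w S) (s : Set V) :
    (G.induce s).IsPathProductMatrix (w ∘ Sym2.map (↑)) (S.submatrix (↑) (↑)) := by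
  intro i j p hp
  have := hS _ _ (p.map (Embedding.induce s).toHom) (hp.map Subtype.val_injective)
  rw [Walk.edges_map, List.map_map] at this
  exact this

end IsPathProductMatrix

theorem prod_edgeFinset_of_neighborSet_eq_singleton {M : Type*} [CommMonoid M] {u v : V}
    [Fintype G.edgeSet] [Fintype (G.induce {v}ᶜ).edgeSet] (hv : G.neighborSet v = {u})
    (f : Sym2 V → M) :
    ∏ e ∈ G.edgeFinset, f e = f s(v, u) * ∏ e ∈ (G.induce {v}ᶜ).edgeFinset, f (e.map (↑)) := by
  classical
  have hadj (x : V) : G.Adj v x ↔ x = u := by rw [← mem_neighborSet, hv, Set.mem_singleton_iff]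
  have hedges : G.edgeFinset =
      insert s(v, u) ((G.induce {v}ᶜ).edgeFinset.map (Function.Embedding.subtype _).sym2Map) := by
    ext e
    induction e using Sym2.ind with | _ a b => ?_
    simp only [mem_edgeFinset, mem_edgeSet, mem_insert, Sym2.eq_iff, mem_map,
      Function.Embedding.sym2Map_apply, Function.Embedding.subtype_apply]
    constructor
    · intro h
      by_cases ha : a = v
      · subst ha; simp [(hadj b).1 h]
      by_cases hb : b = v
      · subst hb; simp [(hadj a).1 h.symm]
      exact Or.inr ⟨s(⟨a, ha⟩, ⟨b, hb⟩), h, rfl⟩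
    · rintro ((⟨rfl, rfl⟩ | ⟨rfl, rfl⟩) | ⟨e, he, hab⟩)
      · exact (hadj _).2 rfl
      · exact ((hadj _).2 rfl).symm
      · rw [← mem_edgeSet, ← hab]
        exact (Embedding.induce _).toHom.map_mem_edgeSet he
  rw [hedges, prod_insert ?_, prod_map]
  · rfl
  · simp only [mem_map, mem_edgeFinset, Function.Embedding.sym2Map_apply,
      Function.Embedding.subtype_apply, not_exists, not_and]
    intro e _ he
    obtain ⟨x, -, hx⟩ := Sym2.mem_map.mp (he ▸ Sym2.mem_mk_left v u)
    exact x.2 hx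

theorem IsTree.det_eq_prod_one_sub_sq [Fintype V] [DecidableEq V] [Fintype G.edgeSet]
    (hG : G.IsTree) (hS : G.IsPathProductMatrix w S) :
    S.det = ∏ e ∈ G.edgeFinset, (1 - w e ^ 2) := by
  refine Fintype.induction_subsingleton_or_nontrivial
    (P := fun V _ => ∀ [DecidableEq V] {G : SimpleGraph V} [Fintype G.edgeSet] {w : Sym2 V → R}
      {S : Matrix V V R}, G.IsTree → G.IsPathProductMatrix w S →
        S.det = ∏ e ∈ G.edgeFinset, (1 - w e ^ 2)) V ?_ ?_ hG hS
  · intro V _ _ _ G _ w S hG hS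
    have : Unique V := _root_.uniqueOfSubsingleton hG.connected.nonempty.some
    have hE : G.edgeFinset = ∅ := by
      simpa [card_eq_zero] using hG.card_edgeFinset
    rw [Matrix.det_unique, hS.apply_self, hE, prod_empty]
  · intro V _ _ ih _ G _ w S hG hS
    classical
    obtain ⟨v, hv⟩ := hG.exists_vert_degree_one_of_nontrivial
    obtain ⟨u, hvu, huniq⟩ := degree_eq_one_iff_existsUnique_adj.mp hv
    have hN : G.neighborSet v = {u} := Set.ext fun x => ⟨huniq x, fun h => h ▸ hvu⟩
    have hG' : (G.induce {v}ᶜ).IsTree :=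
      ⟨hG.connected.induce_compl_singleton_of_degree_eq_one hv, hG.isAcyclic.induce _⟩
    have hSuv : S u v = w s(v, u) := by rw [hS.apply_of_adj hvu.symm, Sym2.eq_swap]
    rw [Matrix.det_eq_mul_det_submatrix_compl_of_row_eq_smul S hvu.ne.symm (w s(v, u))
        fun j hj => hS.apply_of_neighborSet_eq_singleton hG.connected hN hj,
      hS.apply_self, hSuv, ih _ (Fintype.card_subtype_lt (x := v) (by simp))
        hG' (hS.induce _), prod_edgeFinset_of_neighborSet_eq_singleton hN, Function.comp_def]
    ring

end SimpleGraph

open SimpleGraph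

theorem stmt_4_general (N : ℕ) (G : SimpleGraph (Fin N)) (hG : G.IsTree)
    [Fintype G.edgeSet]
    (w : Sym2 (Fin N) → ℝ)
    (S : Matrix (Fin N) (Fin N) ℝ)
    (hS : ∀ (i j : Fin N) (p : G.Walk i j), p.IsPath →
      S i j = (p.edges.map w).prod) :
    S.det = ∏ e ∈ G.edgeFinset, (1 - w e ^ 2) :=
  hG.det_eq_prod_one_sub_sq hS

/-- The determinant of the normalized covariance matrix of a Gaussian tree is
the product of `1 - w_e²` over the edges of the tree. -/
theorem stmt_4 (N : ℕ) (G : SimpleGraph (Fin N)) (hG : G.IsTree)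
    [Fintype G.edgeSet]
    (w : Sym2 (Fin N) → ℝ) (hw : ∀ e ∈ G.edgeSet, |w e| < 1)
    (S : Matrix (Fin N) (Fin N) ℝ)
    (hS : ∀ (i j : Fin N) (p : G.Walk i j), p.IsPath →
      S i j = (p.edges.map w).prod) :
    S.det = ∏ e ∈ G.edgeFinset, (1 - w e ^ 2) :=
  stmt_4_general N G hG w S hS
end

section
/- The Chernoff information between N(0, σ₁²) and N(0, σ₂²) with σ₁² ≠ σ₂² equals g(x) where x = σ₂²/σ₁² and g(x) = (1/2){ln((x−1)/(e·ln x)) + (ln x)/(x−1)}. Specifically, with σ'² = ln(σ₂²/σ₁²)·σ₁²σ₂²/(σ₂² − σ₁²), one has D(σ'²||σ₁²) = D(σ'²||σ₂²) = g(σ₂²/σ₁²). -/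
/-- KL divergence between `N(0,σ²)` and `N(0,τ²)` (closed form). -/
noncomputable def gaussKL (s t : ℝ) : ℝ :=
  (1/2) * Real.log (t / s) + s / (2 * t) - 1/2

/-- The scalar Gaussian Chernoff information as a function of the variance
ratio. -/
noncomputable def gFun (x : ℝ) : ℝ :=
  (1/2) * (Real.log ((x - 1) / (Real.exp 1 * Real.log x)) + Real.log x / (x - 1))

/-!
The variance `σ'² = ln(σ₂²/σ₁²)·σ₁²σ₂²/(σ₂²-σ₁²)` is exactly the one at which the difference
`D(σ'²‖σ₁²) - D(σ'²‖σ₂²) = ½ ln(σ₁²/σ₂²) + σ'²(σ₂²-σ₁²)/(2σ₁²σ₂²)` vanishes. Since `D` only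
depends on the ratio of its arguments, `D(σ'²‖σ₂²) = D(σ'²/σ₂²‖1)` with
`σ'²/σ₂² = ln x/(x-1)`, `x = σ₂²/σ₁²`, and `g(x)` is this expression written out.
-/

/-- The variance `σ'²` at which `N(0,σ'²)` is KL-equidistant from `N(0,s1)` and `N(0,s2)`. -/
noncomputable def chernoffVar (s1 s2 : ℝ) : ℝ :=
  Real.log (s2 / s1) * (s1 * s2) / (s2 - s1)

lemma log_div_ne_zero_of_ne {s1 s2 : ℝ} (hs1 : 0 < s1) (hs2 : 0 < s2) (hne : s1 ≠ s2) :
    Real.log (s2 / s1) ≠ 0 :=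
  Real.log_ne_zero_of_pos_of_ne_one (div_pos hs2 hs1)
    (by rwa [Ne, div_eq_one_iff_eq hs1.ne', eq_comm])

lemma gaussKL_mul_mul {c : ℝ} (hc : c ≠ 0) (s t : ℝ) :
    gaussKL (c * s) (c * t) = gaussKL s t := by
  simp only [gaussKL, mul_div_mul_left _ _ hc, mul_left_comm (2 : ℝ) c t]

lemma gFun_eq_gaussKL {x : ℝ} (hx : Real.log x ≠ 0) :
    gFun x = gaussKL (Real.log x / (x - 1)) 1 := by
  have hx1 : x - 1 ≠ 0 := sub_ne_zero.mpr (by rintro rfl; simp at hx)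
  have hlog : Real.log ((x - 1) / (Real.exp 1 * Real.log x))
      = Real.log (1 / (Real.log x / (x - 1))) - 1 := by
    rw [mul_comm, ← div_div, Real.log_div (div_ne_zero hx1 hx) (Real.exp_pos 1).ne',
      Real.log_exp, one_div_div]
  rw [gFun, gaussKL, hlog]
  ring

lemma chernoffVar_eq_mul {s1 : ℝ} (hs1 : s1 ≠ 0) (s2 : ℝ) :
    chernoffVar s1 s2 = s2 * (Real.log (s2 / s1) / (s2 / s1 - 1)) := by
  rw [chernoffVar, div_sub_one hs1, div_div_eq_mul_div]
  ring

lemma gaussKL_chernoffVar_left_eq_right {s1 s2 : ℝ} (hs1 : 0 < s1) (hs2 : 0 < s2)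
    (hne : s1 ≠ s2) :
    gaussKL (chernoffVar s1 s2) s1 = gaussKL (chernoffVar s1 s2) s2 := by
  have hd : s2 - s1 ≠ 0 := sub_ne_zero.mpr hne.symm
  have hσ : chernoffVar s1 s2 ≠ 0 :=
    div_ne_zero (mul_ne_zero (log_div_ne_zero_of_ne hs1 hs2 hne)
      (mul_ne_zero hs1.ne' hs2.ne')) hd
  rw [gaussKL, gaussKL, Real.log_div hs1.ne' hσ, Real.log_div hs2.ne' hσ, chernoffVar,
    Real.log_div hs2.ne' hs1.ne']
  field_simp
  ring

/-- With `σ'² = ln(σ₂²/σ₁²)·σ₁²σ₂²/(σ₂²-σ₁²)`, the two KL divergences to the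
endpoints coincide and both equal `g(σ₂²/σ₁²)`: the Chernoff information
between `N(0,σ₁²)` and `N(0,σ₂²)` is `g(σ₂²/σ₁²)`. -/
theorem stmt_7 (s1 s2 : ℝ) (hs1 : 0 < s1) (hs2 : 0 < s2) (hne : s1 ≠ s2) :
    gaussKL (Real.log (s2 / s1) * (s1 * s2) / (s2 - s1)) s1 = gFun (s2 / s1) ∧
    gaussKL (Real.log (s2 / s1) * (s1 * s2) / (s2 - s1)) s2 = gFun (s2 / s1) := by
  have hright : gaussKL (chernoffVar s1 s2) s2 = gFun (s2 / s1) := by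
    rw [chernoffVar_eq_mul hs1.ne', gFun_eq_gaussKL (log_div_ne_zero_of_ne hs1 hs2 hne),
      ← gaussKL_mul_mul hs2.ne' _ 1, mul_one]
  exact ⟨(gaussKL_chernoffVar_left_eq_right hs1 hs2 hne).trans hright, hright⟩
end

section
/- Let Σ₁ and Σ₂ be the covariance matrices of the two 3-node Gaussian trees: Σ₁ = [[1, w₁, w₁w₂],[w₁, 1, w₂],[w₁w₂, w₂, 1]] (chain 1–2–3 with weights w₁, w₂) and Σ₂ = [[1, w₁, w₂],[w₁, 1, w₁w₂],[w₂, w₁w₂, 1]] (chain 2–1–3 with weights w₁, w₂), with |w₁| < 1, 0 < |w₂| < 1, w₁ ≠ 1. Then the eigenvalues of S = Σ₁Σ₂⁻¹ are {1, λ_max, 1/λ_max}, where λ_max = (√β + w₂)/(√β − w₂) and β = w₂² + 2(1 − w₂²)/(1 − w₁). -/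
/-!
`μ` is an eigenvalue of `Σ₁Σ₂⁻¹` iff `det (μΣ₂ - Σ₁) = 0`, and this cubic factors as
`(1 - w₁²)(μ - 1)·p(μ)` with `p` palindromic. The roots of `p` are therefore `r` and `r⁻¹`,
where `r + r⁻¹ = 2(1 - w₁w₂²)/(1 - w₂²)`; writing `r = (s + w₂)/(s - w₂)`, this sum is
`2(s² + w₂²)/(s² - w₂²)`, which the choice `s² = β` makes equal to the required value.
-/

open Matrix

theorem Matrix.mem_spectrum_mul_inv_iff {K n : Type*} [Field K] [Fintype n] [DecidableEq n]
    {A B : Matrix n n K} (hB : IsUnit B.det) (μ : K) :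
    μ ∈ spectrum K (A * B⁻¹) ↔ (μ • B - A).det = 0 := by
  have hfactor : algebraMap K (Matrix n n K) μ - A * B⁻¹ = (μ • B - A) * B⁻¹ := by
    rw [Algebra.algebraMap_eq_smul_one, Matrix.sub_mul, Matrix.smul_mul,
      Matrix.mul_nonsing_inv B hB]
  rw [spectrum.mem_iff, hfactor, Matrix.isUnit_iff_isUnit_det, Matrix.det_mul,
    IsUnit.mul_iff, isUnit_iff_ne_zero, not_and_or, not_ne_iff, or_iff_left]
  exact not_not.mpr ((Matrix.isUnit_nonsing_inv_det_iff).mpr hB)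

theorem palindromic_quadratic_eq_zero_iff {K : Type*} [Field K] {p q r μ : K}
    (hp : p ≠ 0) (hr : r ≠ 0) (hq : p * (r + r⁻¹) = q) :
    p * μ ^ 2 - q * μ + p = 0 ↔ μ = r ∨ μ = r⁻¹ := by
  have hfactor : p * μ ^ 2 - q * μ + p = p * ((μ - r) * (μ - r⁻¹)) := by
    rw [← hq]; field_simp; ring
  rw [hfactor, mul_eq_zero, mul_eq_zero, sub_eq_zero, sub_eq_zero, or_iff_right hp]

theorem div_add_inv_div_eq {K : Type*} [Field K] {s w : K}
    (hsub : s - w ≠ 0) (hadd : s + w ≠ 0) :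
    (s + w) / (s - w) + ((s + w) / (s - w))⁻¹ = 2 * (s ^ 2 + w ^ 2) / (s ^ 2 - w ^ 2) := by
  have hdiff : s ^ 2 - w ^ 2 = (s - w) * (s + w) := by ring
  rw [hdiff, inv_div]; field_simp; ring

def covChain123 (w1 w2 : ℝ) : Matrix (Fin 3) (Fin 3) ℝ :=
  !![1, w1, w1 * w2; w1, 1, w2; w1 * w2, w2, 1]

def covChain213 (w1 w2 : ℝ) : Matrix (Fin 3) (Fin 3) ℝ :=
  !![1, w1, w2; w1, 1, w1 * w2; w2, w1 * w2, 1]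

theorem det_covChain213 (w1 w2 : ℝ) : (covChain213 w1 w2).det = (1 - w1 ^ 2) * (1 - w2 ^ 2) := by
  rw [covChain213, det_fin_three]
  simp only [of_apply, cons_val', cons_val_zero, cons_val_one, cons_val, cons_val_fin_one, mul_one,
    one_mul]
  ring

theorem det_smul_covChain213_sub_covChain123 (w1 w2 μ : ℝ) :
    (μ • covChain213 w1 w2 - covChain123 w1 w2).det =
      (1 - w1 ^ 2) * (μ - 1) *
        ((1 - w2 ^ 2) * μ ^ 2 - 2 * (1 - w1 * w2 ^ 2) * μ + (1 - w2 ^ 2)) := by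
  rw [covChain213, covChain123, det_fin_three]
  simp only [smul_of, smul_cons, smul_eq_mul, mul_one, smul_empty, Matrix.sub_apply, of_apply,
    cons_val', cons_val_zero, cons_val_one, cons_val]
  ring

theorem stmt_11_general (w1 w2 : ℝ) (hw1 : |w1| < 1) (hw2' : |w2| < 1) :
    spectrum ℝ
        ((!![(1:ℝ), w1, w1*w2; w1, 1, w2; w1*w2, w2, 1]) *
          (!![(1:ℝ), w1, w2; w1, 1, w1*w2; w2, w1*w2, 1])⁻¹)
      = {1, (Real.sqrt (w2^2 + 2*(1 - w2^2)/(1 - w1)) + w2) /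
              (Real.sqrt (w2^2 + 2*(1 - w2^2)/(1 - w1)) - w2),
           (Real.sqrt (w2^2 + 2*(1 - w2^2)/(1 - w1)) - w2) /
              (Real.sqrt (w2^2 + 2*(1 - w2^2)/(1 - w1)) + w2)} := by
  obtain ⟨hw1l, hw1r⟩ := abs_lt.mp hw1
  have hw1sq : 0 < 1 - w1 ^ 2 := by nlinarith
  have hw2sq : 0 < 1 - w2 ^ 2 := by nlinarith [sq_abs w2, abs_nonneg w2]
  have hgap : 0 < 2 * (1 - w2 ^ 2) / (1 - w1) := div_pos (by linarith) (by linarith)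
  set s := √(w2 ^ 2 + 2 * (1 - w2 ^ 2) / (1 - w1))
  have hs2 : s ^ 2 = w2 ^ 2 + 2 * (1 - w2 ^ 2) / (1 - w1) :=
    Real.sq_sqrt (add_pos_of_nonneg_of_pos (sq_nonneg _) hgap).le
  have hs : |w2| < s := by
    rw [Real.lt_sqrt (abs_nonneg _), sq_abs]
    linarith
  have hsub : 0 < s - w2 := by linarith [le_abs_self w2]
  have hadd : 0 < s + w2 := by linarith [neg_abs_le w2]
  have hsum : (1 - w2 ^ 2) * ((s + w2) / (s - w2) + ((s + w2) / (s - w2))⁻¹) =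
      2 * (1 - w1 * w2 ^ 2) := by
    rw [div_add_inv_div_eq hsub.ne' hadd.ne', hs2]
    field_simp
    ring
  have hdet : IsUnit (covChain213 w1 w2).det := by
    rw [det_covChain213, isUnit_iff_ne_zero]; positivity
  show spectrum ℝ (covChain123 w1 w2 * (covChain213 w1 w2)⁻¹) = _
  ext μ
  rw [Matrix.mem_spectrum_mul_inv_iff hdet,
    det_smul_covChain213_sub_covChain123, mul_eq_zero, mul_eq_zero, or_iff_right hw1sq.ne',
    sub_eq_zero, palindromic_quadratic_eq_zero_iff hw2sq.ne' (div_pos hadd hsub).ne' hsum, inv_div,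
    Set.mem_insert_iff, Set.mem_insert_iff, Set.mem_singleton_iff]

/-- The generalized eigenvalues of the covariance matrices of the two 3-node
Gaussian trees related by an edge-grafting operation, i.e. the eigenvalues of
`S = Σ₁Σ₂⁻¹`, are `{1, λ_max, 1/λ_max}` with
`λ_max = (√β + w₂)/(√β - w₂)`, `β = w₂² + 2(1-w₂²)/(1-w₁)`. -/
theorem stmt_11 (w1 w2 : ℝ) (hw1 : |w1| < 1) (hw2 : 0 < |w2|) (hw2' : |w2| < 1) :
    spectrum ℝ
        ((!![(1:ℝ), w1, w1*w2; w1, 1, w2; w1*w2, w2, 1]) *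
          (!![(1:ℝ), w1, w2; w1, 1, w1*w2; w2, w1*w2, 1])⁻¹)
      = {1, (Real.sqrt (w2^2 + 2*(1 - w2^2)/(1 - w1)) + w2) /
              (Real.sqrt (w2^2 + 2*(1 - w2^2)/(1 - w1)) - w2),
           (Real.sqrt (w2^2 + 2*(1 - w2^2)/(1 - w1)) - w2) /
              (Real.sqrt (w2^2 + 2*(1 - w2^2)/(1 - w1)) + w2)} :=
  stmt_11_general w1 w2 hw1 hw2'
end

section
/- Define G₁(x) = (ln x)/(x−1) − ln((ln x)/(x−1)) − 1 and G₂(x) = ln((x+1)/(2√x)) for x > 1. Then G₁(x) ≥ G₂(x) for all x > 1. -/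
/-!
With `s = (x + 1) / 2` and `t = ln x / (x - 1)` one has `ln((x+1)/(2√x)) = ln s - t (s - 1)`,
so `G₁(x) - G₂(x) = s t - 1 - ln (s t)`, which is nonnegative by `ln y ≤ y - 1`.
-/

open Real

lemma log_sub_mul_sub_one_le {s t : ℝ} (hs : 0 < s) (ht : 0 < t) :
    log s - t * (s - 1) ≤ t - log t - 1 := by
  have h := log_le_sub_one_of_pos (mul_pos hs ht)
  rw [log_mul hs.ne' ht.ne'] at h
  linarith

lemma log_add_one_div_two_mul_sqrt {x : ℝ} (hx : 1 < x) :
    log ((x + 1) / (2 * √x)) = log ((x + 1) / 2) - log x / (x - 1) * ((x + 1) / 2 - 1) := by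
  have hx0 : 0 < x := by linarith
  have hx1 : x - 1 ≠ 0 := by linarith
  rw [div_mul_eq_div_div, log_div (by positivity) (sqrt_pos.mpr hx0).ne', log_sqrt hx0.le]
  field_simp
  ring

/-- `G₁(x) = (ln x)/(x-1) - ln((ln x)/(x-1)) - 1` dominates
`G₂(x) = ln((x+1)/(2√x))` on `(1, ∞)`. -/
theorem stmt_15 (x : ℝ) (hx : 1 < x) :
    Real.log ((x + 1) / (2 * Real.sqrt x)) ≤
      Real.log x / (x - 1) - Real.log (Real.log x / (x - 1)) - 1 := by
  rw [log_add_one_div_two_mul_sqrt hx]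
  exact log_sub_mul_sub_one_le (by linarith) (div_pos (log_pos hx) (by linarith))
end

section
/- For x > 1, let F(x) = ln x · (x³ + 5x² − 5x − 1) − (ln x)² · (2x + 2x²) − 2x³ + 2x² + 2x − 2. Then F(x) ≥ 0 for all x ≥ 1. -/
/-!
As a quadratic in `L = log x`, the expression factors as
`((x + 1) L - 2 (x - 1)) · (x² - 1 - 2 x L)`.
Both factors are nonnegative for `x ≥ 1`: the first is the mean inequality
`(x - 1) / log x ≤ (x + 1) / 2` (logarithmic ≤ arithmetic), the second is
`log x ≤ sinh (log x)`.
-/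

open Real

theorem two_mul_sub_one_le_add_one_mul_log {x : ℝ} (hx : 1 ≤ x) :
    2 * (x - 1) ≤ (x + 1) * log x := by
  set y := (x - 1) / (x + 1) with hy
  have hy₀ : 0 ≤ y := div_nonneg (by linarith) (by linarith)
  have hy₁ : y < 1 := (div_lt_one (by linarith)).2 (by linarith)
  -- `y ≤ artanh y = (1/2) log x`, the first term of the series of `artanh`
  have h := sum_range_le_log_div hy₀ hy₁ 1
  have hx' : (1 + y) / (1 - y) = x := by
    rw [hy]; field_simp; ring
  norm_num [hx'] at h
  have hxy : 2 * (x - 1) = 2 * ((x + 1) * y) := by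
    rw [hy]; field_simp
  rw [hxy]
  linarith [mul_le_mul_of_nonneg_left h (by linarith : (0 : ℝ) ≤ x + 1)]

theorem two_mul_log_le_sub_inv {x : ℝ} (hx : 1 ≤ x) : 2 * log x ≤ x - x⁻¹ := by
  have h := self_le_sinh_iff.2 (log_nonneg hx)
  rw [sinh_log (by linarith)] at h
  linarith

/-- The key polynomial–logarithmic inequality:
`F(x) = ln x (x³+5x²-5x-1) - (ln x)² (2x+2x²) - 2x³+2x²+2x-2 ≥ 0` for `x ≥ 1`. -/
theorem stmt_16 (x : ℝ) (hx : 1 ≤ x) :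
    0 ≤ Real.log x * (x^3 + 5*x^2 - 5*x - 1) -
        (Real.log x)^2 * (2*x + 2*x^2) - 2*x^3 + 2*x^2 + 2*x - 2 := by
  have h₁ := two_mul_sub_one_le_add_one_mul_log hx
  have h₂ := two_mul_log_le_sub_inv hx
  calc 0 ≤ ((x + 1) * log x - 2 * (x - 1)) * (x * (x - x⁻¹ - 2 * log x)) :=
        mul_nonneg (by linarith) (mul_nonneg (by linarith) (by linarith))
    _ = _ := by field_simp; ring
end

section
/- Suppose Σ₁, Σ₂ are N×N positive definite matrices and there exists x ≥ 1 such that 1/x ≤ (αᵀΣ₁α)/(αᵀΣ₂α) ≤ x for all nonzero α ∈ ℝᴺ. Let w ∈ (−1,1), let β₁, β₂ be the j-th columns of Σ₁, Σ₂ respectively, and define the (N+1)×(N+1) matrices Σ₁' = [[Σ₁, wβ₁],[wβ₁ᵀ, 1]] and Σ₂' = [[Σ₂, wβ₂],[wβ₂ᵀ, 1]]. Then 1/x ≤ (γᵀΣ₁'γ)/(γᵀΣ₂'γ) ≤ x for all nonzero γ ∈ ℝᴺ⁺¹. -/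
/-!
Write the vector as `(a, t)` and put `b = a + w t e_j`. Because `S j j = 1`, the quadratic form of
the extended matrix at `(a, t)` is `bᵀ S b + (1 - w²) t²`. The vector `b` and the correction
`(1 - w²) t² ≥ 0` are the same for `Σ₁` and `Σ₂`, and adding a common nonnegative term to two
quantities that dominate each other up to the factor `x ≥ 1` preserves that domination.
-/

open Matrix

theorem one_div_le_div_and_div_le_iff {α : Type*} [Field α] [LinearOrder α] [IsStrictOrderedRing α]
    {p q x : α} (hq : 0 < q) (hx : 0 < x) :
    (1 / x ≤ p / q ∧ p / q ≤ x) ↔ (q ≤ x * p ∧ p ≤ x * q) := by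
  rw [div_le_div_iff₀ hx hq, div_le_iff₀ hq, one_mul, mul_comm p x]

theorem add_le_mul_add {α : Type*} [Semiring α] [PartialOrder α] [IsOrderedRing α]
    {p q c x : α} (hx : 1 ≤ x) (hc : 0 ≤ c) (h : p ≤ x * q) : p + c ≤ x * (q + c) := by
  rw [mul_add]
  exact add_le_add h (le_mul_of_one_le_left hc hx)

namespace Matrix

variable {n R : Type*}

/-- The covariance of a normalized Gaussian tree after a new leaf is attached to node `j` by an
edge of correlation `w`. -/
def leafExtension [CommRing R] (S : Matrix n n R) (j : n) (w : R) :
    Matrix (n ⊕ Unit) (n ⊕ Unit) R :=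
  fromBlocks S (of fun i _ => w * S i j) (of fun _ k => w * S k j) 1

theorem dotProduct_leafExtension_mulVec [Fintype n] [DecidableEq n] [CommRing R]
    {S : Matrix n n R} (hS : S.IsSymm) {j : n} (hjj : S j j = 1) (w : R)
    (a : n → R) (t : Unit → R) :
    Sum.elim a t ⬝ᵥ (leafExtension S j w *ᵥ Sum.elim a t) =
      (a + Pi.single j (w * t ())) ⬝ᵥ (S *ᵥ (a + Pi.single j (w * t ()))) +
        (1 - w ^ 2) * t () ^ 2 := by
  set s : n → R := Pi.single j (w * t ())
  have hcol : S *ᵥ s = fun i => S i j * (w * t ()) := mulVec_single _ _ _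
  have hright : (of fun i (_ : Unit) => w * S i j) *ᵥ t = S *ᵥ s := by
    rw [hcol]; ext i
    simp only [mulVec, dotProduct, Finset.univ_unique, PUnit.default_eq_unit, of_apply,
      Finset.sum_singleton]
    ring
  have hbottom : t ⬝ᵥ ((of fun (_ : Unit) k => w * S k j) *ᵥ a) = a ⬝ᵥ (S *ᵥ s) := by
    rw [hcol]
    simp only [dotProduct, Finset.univ_unique, PUnit.default_eq_unit, mulVec, of_apply,
      Finset.mul_sum, Finset.sum_singleton]
    exact Finset.sum_congr rfl fun _ _ => by ring
  have hleaf : t ⬝ᵥ ((1 : Matrix Unit Unit R) *ᵥ t) = t () ^ 2 := by simp [dotProduct, sq]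
  have hss : s ⬝ᵥ (S *ᵥ s) = w ^ 2 * t () ^ 2 := by
    simp only [s, single_dotProduct, hcol, hjj]; ring
  have hcross : s ⬝ᵥ (S *ᵥ a) = a ⬝ᵥ (S *ᵥ s) := by
    rw [dotProduct_mulVec, ← mulVec_transpose, hS.eq, dotProduct_comm]
  rw [leafExtension, fromBlocks_mulVec, sumElim_dotProduct_sumElim, Sum.elim_comp_inl,
    Sum.elim_comp_inr, dotProduct_add, dotProduct_add, hright, hbottom, hleaf, mulVec_add,
    add_dotProduct, dotProduct_add, dotProduct_add, hss, hcross]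
  ring

theorem PosDef.leafExtension [Fintype n] [DecidableEq n] {S : Matrix n n ℝ} (hS : S.PosDef)
    {j : n} (hjj : S j j = 1) {w : ℝ} (hw : w ∈ Set.Ioo (-1) 1) : (leafExtension S j w).PosDef := by
  have hsymm : S.IsSymm := isHermitian_iff_isSymm.1 hS.isHermitian
  refine .of_dotProduct_mulVec_pos (isHermitian_iff_isSymm.2 ?_) fun g hg => ?_
  · exact hsymm.fromBlocks (by ext; rfl) isSymm_one
  obtain ⟨a, t, rfl⟩ : ∃ a t, g = Sum.elim a t := ⟨_, _, (Sum.elim_comp_inl_inr g).symm⟩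
  have hw2 : 0 < 1 - w ^ 2 := sub_pos.2 ((sq_lt_one_iff_abs_lt_one w).2 (abs_lt.2 hw))
  rw [star_trivial, dotProduct_leafExtension_mulVec hsymm hjj]
  rcases eq_or_ne (t ()) 0 with ht | ht
  · have ha : a ≠ 0 := by
      rintro rfl
      exact hg (by ext (_ | _) <;> simp [ht])
    simpa [ht] using hS.dotProduct_mulVec_pos ha
  · refine add_pos_of_nonneg_of_pos ?_ (by positivity)
    simpa only [star_trivial] using hS.posSemidef.dotProduct_mulVec_nonneg _

theorem dotProduct_mulVec_le_mul_of_ratio_bounds [Fintype n] {S T : Matrix n n ℝ} (hT : T.PosDef)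
    {x : ℝ} (hx : 0 < x)
    (h : ∀ a : n → ℝ, a ≠ 0 →
      1 / x ≤ (a ⬝ᵥ (S *ᵥ a)) / (a ⬝ᵥ (T *ᵥ a)) ∧ (a ⬝ᵥ (S *ᵥ a)) / (a ⬝ᵥ (T *ᵥ a)) ≤ x)
    (a : n → ℝ) :
    a ⬝ᵥ (T *ᵥ a) ≤ x * (a ⬝ᵥ (S *ᵥ a)) ∧ a ⬝ᵥ (S *ᵥ a) ≤ x * (a ⬝ᵥ (T *ᵥ a)) := by
  rcases eq_or_ne a 0 with rfl | ha
  · simp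
  · have hTa : 0 < a ⬝ᵥ (T *ᵥ a) := by simpa only [star_trivial] using hT.dotProduct_mulVec_pos ha
    exact (one_div_le_div_and_div_le_iff hTa hx).1 (h a ha)

end Matrix

/-- Appending an identical leaf (attached to node `j` with weight `w` in both
normalized Gaussian tree covariances) does not enlarge the range of the
Rayleigh quotient of the matrix pencil. -/
theorem stmt_18 (N : ℕ) (S1 S2 : Matrix (Fin N) (Fin N) ℝ)
    (h1 : S1.PosDef) (h2 : S2.PosDef)
    (hdiag : ∀ i, S1 i i = 1 ∧ S2 i i = 1)
    (x : ℝ) (hx : 1 ≤ x)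
    (hratio : ∀ a : Fin N → ℝ, a ≠ 0 →
      1/x ≤ (a ⬝ᵥ (S1 *ᵥ a)) / (a ⬝ᵥ (S2 *ᵥ a)) ∧
      (a ⬝ᵥ (S1 *ᵥ a)) / (a ⬝ᵥ (S2 *ᵥ a)) ≤ x)
    (w : ℝ) (hw : w ∈ Set.Ioo (-1 : ℝ) 1) (j : Fin N) :
    let S1' : Matrix (Fin N ⊕ Unit) (Fin N ⊕ Unit) ℝ :=
      Matrix.fromBlocks S1 (Matrix.of fun i (_ : Unit) => w * S1 i j)
        (Matrix.of fun (_ : Unit) k => w * S1 k j) 1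
    let S2' : Matrix (Fin N ⊕ Unit) (Fin N ⊕ Unit) ℝ :=
      Matrix.fromBlocks S2 (Matrix.of fun i (_ : Unit) => w * S2 i j)
        (Matrix.of fun (_ : Unit) k => w * S2 k j) 1
    ∀ g : Fin N ⊕ Unit → ℝ, g ≠ 0 →
      1/x ≤ (g ⬝ᵥ (S1' *ᵥ g)) / (g ⬝ᵥ (S2' *ᵥ g)) ∧
      (g ⬝ᵥ (S1' *ᵥ g)) / (g ⬝ᵥ (S2' *ᵥ g)) ≤ x := by
  intro S1' S2' g hg
  have hS1' : S1' = leafExtension S1 j w := rfl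
  have hS2' : S2' = leafExtension S2 j w := rfl
  rw [hS1', hS2']
  have hx0 : 0 < x := one_pos.trans_le hx
  have hQ : 0 < g ⬝ᵥ (leafExtension S2 j w *ᵥ g) := by
    simpa only [star_trivial] using (h2.leafExtension (hdiag j).2 hw).dotProduct_mulVec_pos hg
  rw [one_div_le_div_and_div_le_iff hQ hx0]
  obtain ⟨a, t, rfl⟩ : ∃ a t, g = Sum.elim a t := ⟨_, _, (Sum.elim_comp_inl_inr g).symm⟩
  have hc : 0 ≤ (1 - w ^ 2) * t () ^ 2 :=
    mul_nonneg (sub_nonneg.2 ((sq_le_one_iff_abs_le_one w).2 (abs_le.2 ⟨hw.1.le, hw.2.le⟩)))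
      (sq_nonneg _)
  obtain ⟨hle, hge⟩ :=
    dotProduct_mulVec_le_mul_of_ratio_bounds h2 hx0 hratio (a + Pi.single j (w * t ()))
  rw [dotProduct_leafExtension_mulVec (isHermitian_iff_isSymm.1 h1.isHermitian) (hdiag j).1,
    dotProduct_leafExtension_mulVec (isHermitian_iff_isSymm.1 h2.isHermitian) (hdiag j).2]
  exact ⟨add_le_mul_add hx hc hle, add_le_mul_add hx hc hge⟩
end
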